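/- arXiv:1805.02401 — 2 statements merged into one kernel-verified Lean document; each statement's English description precedes it below -/
import Mathlib

section
/- Let T be a finite rooted tree with an input value input(p) ∈ ℕ at each vertex. If a configuration assigns sub(p), res(p) ∈ ℕ to each vertex such that (1) sub(p) = input(p) + Σ_{q ∈ children(p)} sub(q) for every p, and (2) res(r) = sub(r) for the root r, and res(p) = max(res(parent(p)), sub(p)) for every non-root p, then sub(r) = Σ_{q ∈ V} input(q) and res(p) = Σ_{q ∈ V} input(q) for every vertex p. -/
/-- Every terminal configuration of the toy algorithm 𝒯ℰ on a finite rooted tree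
satisfies P_input: sub(r) is the sum of all inputs and every res equals that sum. -/
theorem stmt10 {V : Type} [Fintype V] [DecidableEq V]
    (r : V) (parent : V → Option V)
    (hroot : ∀ p : V, parent p = none ↔ p = r)
    (hacyc : ∀ p : V, ¬ Relation.TransGen (fun a b => parent a = some b) p p)
    (children : V → Finset V)
    (hchildren : ∀ p : V, children p = Finset.univ.filter (fun q => parent q = some p))
    (input sub res : V → ℕ)
    (hsub : ∀ p : V, sub p = input p + ∑ q ∈ children p, sub q)
    (hresr : res r = sub r)
    (hres : ∀ p q : V, parent p = some q → res p = max (res q) (sub p)) :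
    sub r = ∑ q : V, input q ∧ ∀ p : V, res p = ∑ q : V, input q := by
  classical
  set step : V → V → Prop := fun a b => parent a = some b with hstep
  -- deterministic
  have hdet : ∀ a b c, step a b → step a c → b = c := by
    intro a b c h1 h2
    simp only [hstep] at h1 h2
    rw [h1] at h2; exact Option.some.inj h2
  -- well-foundedness of step (children smaller)
  have hwf1 : WellFounded step := by
    have hirr : IsIrrefl V (Relation.TransGen step) := ⟨hacyc⟩
    have htr : IsTrans V (Relation.TransGen step) := inferInstance
    have hwf : WellFounded (Relation.TransGen step) :=
      Finite.wellFounded_of_trans_of_irrefl _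
    exact Subrelation.wf (fun h => Relation.TransGen.single h) hwf
  -- well-foundedness of flip step (parents smaller)
  have hwf2 : WellFounded (flip step) := by
    have hirr : IsIrrefl V (Relation.TransGen (flip step)) := ⟨by
      intro p hp
      exact hacyc p (Relation.transGen_swap.mp hp)⟩
    have hwf : WellFounded (Relation.TransGen (flip step)) :=
      Finite.wellFounded_of_trans_of_irrefl _
    exact Subrelation.wf (fun h => Relation.TransGen.single h) hwf
  -- descendants
  set D : V → Finset V := fun p => Finset.univ.filter
      (fun x => Relation.ReflTransGen step x p) with hD
  have hmemD : ∀ x p, x ∈ D p ↔ Relation.ReflTransGen step x p := by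
    intro x p; simp [hD]
  -- directedness along deterministic chains
  have hdir : ∀ x a b, Relation.ReflTransGen step x a → Relation.ReflTransGen step x b →
      Relation.ReflTransGen step a b ∨ Relation.ReflTransGen step b a := by
    intro x a b h1
    induction h1 using Relation.ReflTransGen.head_induction_on with
    | refl => intro h2; exact Or.inl h2
    | head hxy _ ih =>
      rename_i x' y' _
      intro h2
      rcases h2.cases_head with rfl | ⟨z, hxz, hzb⟩
      · right; exact Relation.ReflTransGen.head hxy (by assumption)
      · have : z = y' := hdet _ _ _ hxz hxy
        subst this
        exact ih hzb
  -- structure of descendant sets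
  have hDeq : ∀ p, D p = insert p ((children p).biUnion D) := by
    intro p
    ext x
    simp only [Finset.mem_insert, Finset.mem_biUnion, hmemD, hchildren,
      Finset.mem_filter, Finset.mem_univ, true_and]
    constructor
    · intro h
      rcases h.cases_tail with h | ⟨c, hxc, hcp⟩
      · left; exact h.symm
      · right; exact ⟨c, hcp, hxc⟩
    · rintro (rfl | ⟨c, hcp, hxc⟩)
      · exact Relation.ReflTransGen.refl
      · exact hxc.tail hcp
  have hpnot : ∀ p, p ∉ (children p).biUnion D := by
    intro p hp
    rw [Finset.mem_biUnion] at hp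
    obtain ⟨c, hc, hpc⟩ := hp
    rw [hchildren, Finset.mem_filter] at hc
    exact hacyc p (Relation.TransGen.tail' ((hmemD p c).mp hpc) hc.2)
  have hdisj : ∀ p, (↑(children p) : Set V).PairwiseDisjoint D := by
    intro p c1 hc1 c2 hc2 hne
    simp only [Finset.coe_mem, Finset.mem_coe, hchildren, Finset.mem_filter] at hc1 hc2
    refine Finset.disjoint_left.mpr ?_
    intro x hx1 hx2
    have h1 := (hmemD x c1).mp hx1
    have h2 := (hmemD x c2).mp hx2
    have key : ∀ a b : V, a ≠ b → parent a = some p → parent b = some p →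
        Relation.ReflTransGen step x a → Relation.ReflTransGen step x b →
        Relation.ReflTransGen step a b → False := by
      intro a b hab hap hbp _ _ hab'
      rcases hab'.cases_head with rfl | ⟨z, haz, hzb⟩
      · exact hab rfl
      · have hz : z = p := hdet _ _ _ haz hap
        rw [hz] at hzb
        exact hacyc p (Relation.TransGen.tail' hzb hbp)
    rcases hdir x c1 c2 h1 h2 with h | h
    · exact key c1 c2 hne hc1.2 hc2.2 h1 h2 h
    · exact key c2 c1 (Ne.symm hne) hc2.2 hc1.2 h2 h1 h
  -- sub p = sum of inputs over descendants
  have hsubsum : ∀ p, sub p = ∑ x ∈ D p, input x := by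
    intro p
    induction p using hwf1.induction with
    | _ p ih =>
      rw [hsub p, hDeq p, Finset.sum_insert (hpnot p),
        Finset.sum_biUnion (hdisj p)]
      congr 1
      refine Finset.sum_congr rfl ?_
      intro c hc
      rw [hchildren, Finset.mem_filter] at hc
      exact ih c hc.2
  -- every vertex is a descendant of r
  have hall : ∀ x, Relation.ReflTransGen step x r := by
    intro x
    induction x using hwf2.induction with
    | _ x ih =>
      cases hpx : parent x with
      | none => rw [(hroot x).mp hpx]
      | some q => exact Relation.ReflTransGen.head hpx (ih q hpx)
  have hDr : D r = Finset.univ := by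
    ext x; simp [hmemD, hall x]
  have hsubr : sub r = ∑ q : V, input q := by
    rw [hsubsum r, hDr]
  have hle : ∀ p, sub p ≤ sub r := by
    intro p
    rw [hsubsum p, hsubr]
    exact Finset.sum_le_sum_of_subset (Finset.subset_univ _)
  have hresall : ∀ p, res p = sub r := by
    intro p
    induction p using hwf2.induction with
    | _ p ih =>
      cases hpp : parent p with
      | none => rw [(hroot p).mp hpp]; exact hresr
      | some q =>
        rw [hres p q hpp, ih q hpp, max_eq_left (hle p)]
  exact ⟨hsubr, fun p => (hresall p).trans hsubr⟩
end

section
/- In the star network with root p_1 and n−1 leaves, all inputs equal to 1, starting from configuration C_i (where sub(p_1) = i, sub(p_j) = 1 for 2 ≤ j ≤ i, sub(p_j) = 0 for j > i, and res(p_j) = i for all j) with 1 ≤ i ≤ n−1, the sequential schedule 'S(p_{i+1}); S(p_1); R(p_1); R(p_2); …; R(p_n)' is a valid execution fragment of 𝒯ℰ (each action is enabled when scheduled) and leads to configuration C_{i+1}. -/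
/-!
After `S(p_{i+1})` the leaf `p_{i+1}` holds `1`, so `S(p₁)` now sees `i` leaves holding `1` and
raises `sub(p₁)` to `i + 1`. `R(p₁)` copies this value into `res(p₁)`, and every leaf then
adopts `max(res(p₁), sub) = i + 1` under `R`, because a leaf's `sub` is at most `1`.
-/

namespace TEStar

/-- Children in the star rooted at 0: the root's children are all other vertices. -/
def children (n : ℕ) [NeZero n] (p : Fin n) : Finset (Fin n) :=
  if p = 0 then Finset.univ.erase 0 else ∅

/-- A configuration: the sub-values and the res-values. -/
abbrev Cfg (n : ℕ) := (Fin n → ℕ) × (Fin n → ℕ)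

/-- An action: (true, p) is S(p), (false, p) is R(p). -/
abbrev Act (n : ℕ) := Bool × Fin n

/-- Value written by S(p) (all inputs equal 1). -/
def sTarget (n : ℕ) [NeZero n] (c : Cfg n) (p : Fin n) : ℕ :=
  1 + ∑ q ∈ children n p, c.1 q

/-- Value written by R(p) (the parent of any non-root vertex is the root 0). -/
def rTarget (n : ℕ) [NeZero n] (c : Cfg n) (p : Fin n) : ℕ :=
  if p = 0 then c.1 0 else max (c.2 0) (c.1 p)

/-- Guard of an action. -/
def enabled (n : ℕ) [NeZero n] (c : Cfg n) (a : Act n) : Prop :=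
  if a.1 then c.1 a.2 ≠ sTarget n c a.2 else c.2 a.2 ≠ rTarget n c a.2

/-- Effect of an action. -/
def applyAct (n : ℕ) [NeZero n] (c : Cfg n) (a : Act n) : Cfg n :=
  if a.1 then (Function.update c.1 a.2 (sTarget n c a.2), c.2)
  else (c.1, Function.update c.2 a.2 (rTarget n c a.2))

/-- A schedule is a valid (central-daemon) execution fragment from `c` when each
listed action is enabled in the configuration at which it is executed. -/
def valid (n : ℕ) [NeZero n] : Cfg n → List (Act n) → Prop
  | _, [] => True
  | c, a :: t => enabled n c a ∧ valid n (applyAct n c a) t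

/-- Resulting configuration after running a schedule. -/
def run (n : ℕ) [NeZero n] (c : Cfg n) (l : List (Act n)) : Cfg n :=
  l.foldl (applyAct n) c

/-- Configuration C_i: sub(p₁) = i, sub(p_j) = 1 for 2 ≤ j ≤ i, sub(p_j) = 0 for
j > i, res ≡ i (here vertex v : Fin n stands for process p_{v+1}). -/
def C (n : ℕ) [NeZero n] (i : ℕ) : Cfg n :=
  (fun j => if j = 0 then i else if (j : ℕ) < i then 1 else 0, fun _ => i)

variable {n : ℕ} [NeZero n]

theorem valid_cons_and_run_cons_iff {c c' d : Cfg n} {a : Act n} {l : List (Act n)}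
    (ha : enabled n c a) (hc' : applyAct n c a = c') :
    (valid n c (a :: l) ∧ run n c (a :: l) = d) ↔ (valid n c' l ∧ run n c' l = d) := by
  subst hc'
  exact and_congr (and_iff_right ha) Iff.rfl

theorem valid_and_run_map_R {c : Cfg n} {l : List (Fin n)} (hl : l.Nodup) (h0 : (0 : Fin n) ∉ l)
    (hsub : ∀ j ∈ l, c.1 j ≤ c.2 0) (hres : ∀ j ∈ l, c.2 j ≠ c.2 0) :
    valid n c (l.map (false, ·)) ∧
      run n c (l.map (false, ·)) = (c.1, fun j => if j ∈ l then c.2 0 else c.2 j) := by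
  induction l generalizing c with
  | nil => exact ⟨trivial, rfl⟩
  | cons a t ih =>
    obtain ⟨hat, ht⟩ := List.nodup_cons.1 hl
    have ha0 : a ≠ 0 := fun h => h0 (h ▸ List.mem_cons_self)
    have htarget : rTarget n c a = c.2 0 := by
      simp [rTarget, ha0, hsub a List.mem_cons_self]
    have hroot : Function.update c.2 a (c.2 0) 0 = c.2 0 := Function.update_of_ne ha0.symm _ _
    rw [List.map_cons, valid_cons_and_run_cons_iff (l := t.map _)
      (by rw [enabled, htarget]; exact hres a List.mem_cons_self) (by rw [applyAct, htarget])]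
    obtain ⟨hvalid, hrun⟩ := ih (c := (c.1, Function.update c.2 a (c.2 0))) ht
      (fun h => h0 (List.mem_cons_of_mem a h))
      (fun j hj => by dsimp only; rw [hroot]; exact hsub j (List.mem_cons_of_mem a hj))
      (fun j hj => by
        dsimp only
        rw [hroot, Function.update_of_ne (by rintro rfl; exact hat hj)]
        exact hres j (List.mem_cons_of_mem a hj))
    refine ⟨hvalid, hrun.trans (Prod.ext rfl (funext fun j => ?_))⟩
    by_cases hja : j = a
    · subst hja; simp [hat]
    · simp [hroot, hja]

theorem sTarget_of_ne_zero (c : Cfg n) {p : Fin n} (hp : p ≠ 0) : sTarget n c p = 1 := by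
  simp [sTarget, children, hp]

theorem sTarget_zero_update_zero (c : Cfg n) (x : ℕ) :
    sTarget n (Function.update c.1 0 x, c.2) 0 = sTarget n c 0 := by
  simp only [sTarget, children]
  congr 1
  exact Finset.sum_congr rfl fun q hq => Function.update_of_ne (Finset.ne_of_mem_erase hq) _ _

theorem C_fst_le_one (k : ℕ) {j : Fin n} (hj : j ≠ 0) : (C n k).1 j ≤ 1 := by
  simp only [C, if_neg hj]
  split <;> omega

theorem sTarget_zero_C {k : ℕ} (hk : 1 ≤ k) (hkn : k ≤ n) : sTarget n (C n k) 0 = k := by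
  have hleaves : ∀ q ∈ Finset.univ.erase 0, (C n k).1 q = if (q : ℕ) < k then 1 else 0 :=
    fun q hq => if_neg (Finset.ne_of_mem_erase hq)
  have hcount : ∑ q : Fin n, (if (q : ℕ) < k then 1 else 0) = k := by
    rw [Finset.sum_boole, Nat.cast_id, Fin.card_filter_val_lt, min_eq_right hkn]
  rw [← Finset.sum_erase_add _ _ (Finset.mem_univ 0), Fin.val_zero, if_pos (by omega)] at hcount
  rw [sTarget, children, if_pos rfl, Finset.sum_congr rfl hleaves]
  omega

theorem enabled_and_applyAct_S_C {i : ℕ} (hi1 : 1 ≤ i) (hi : i < n) :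
    enabled n (C n i) (true, ⟨i, hi⟩) ∧
      applyAct n (C n i) (true, ⟨i, hi⟩) = (Function.update (C n (i + 1)).1 0 i, fun _ => i) := by
  have hv0 : (⟨i, hi⟩ : Fin n) ≠ 0 := by simp [Fin.ext_iff]; omega
  refine ⟨by simp [enabled, sTarget_of_ne_zero _ hv0, C, hv0], ?_⟩
  rw [applyAct, if_pos rfl, sTarget_of_ne_zero _ hv0]
  refine Prod.ext (funext fun j => ?_) rfl
  by_cases hj0 : j = 0
  · subst hj0; simp [C, hv0.symm]
  · rw [Fin.ext_iff, Fin.val_zero] at hj0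
    simp only [Function.update_apply, C, Fin.ext_iff, Fin.val_zero]
    split_ifs <;> omega

theorem enabled_and_applyAct_S_zero {i : ℕ} (hi : i + 1 ≤ n) :
    enabled n (Function.update (C n (i + 1)).1 0 i, fun _ => i) (true, 0) ∧
      applyAct n (Function.update (C n (i + 1)).1 0 i, fun _ => i) (true, 0) =
        ((C n (i + 1)).1, fun _ => i) := by
  have htarget : sTarget n (Function.update (C n (i + 1)).1 0 i, fun _ => i) 0 = i + 1 :=
    (sTarget_zero_update_zero (C n (i + 1)) i).trans (sTarget_zero_C (by omega) hi)
  refine ⟨by simp [enabled, htarget], ?_⟩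
  rw [applyAct, if_pos rfl, htarget, Function.update_idem]
  exact Prod.ext (Function.update_eq_self_iff.2 (by simp [C])) rfl

theorem enabled_and_applyAct_R_zero (i : ℕ) :
    enabled n ((C n (i + 1)).1, fun _ => i) (false, 0) ∧
      applyAct n ((C n (i + 1)).1, fun _ => i) (false, 0) =
        ((C n (i + 1)).1, Function.update (fun _ => i) 0 (i + 1)) := by
  have htarget : rTarget n ((C n (i + 1)).1, fun _ => i) 0 = i + 1 := by simp [rTarget, C]
  exact ⟨by simp [enabled, htarget], by rw [applyAct, if_neg Bool.false_ne_true, htarget]⟩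

theorem valid_and_run_R_succ (m i : ℕ) :
    valid (m + 1) ((C (m + 1) (i + 1)).1, Function.update (fun _ => i) 0 (i + 1))
        (((List.finRange m).map Fin.succ).map (false, ·)) ∧
      run (m + 1) ((C (m + 1) (i + 1)).1, Function.update (fun _ => i) 0 (i + 1))
        (((List.finRange m).map Fin.succ).map (false, ·)) = C (m + 1) (i + 1) := by
  have hleaves : ∀ j ∈ (List.finRange m).map Fin.succ, j ≠ 0 := by simp
  obtain ⟨hvalid, hrun⟩ := valid_and_run_map_R
    (c := ((C (m + 1) (i + 1)).1, Function.update (fun _ => i) 0 (i + 1)))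
    ((List.nodup_finRange m).map (Fin.succ_injective m)) (fun h => hleaves 0 h rfl)
    (fun j hj => (C_fst_le_one (i + 1) (hleaves j hj)).trans (by simp))
    (fun j hj => by simp [Function.update_of_ne (hleaves j hj)])
  refine ⟨hvalid, hrun.trans (Prod.ext rfl (funext fun j => ?_))⟩
  rcases Fin.eq_zero_or_eq_succ j with rfl | ⟨k, rfl⟩ <;> simp [C]

/-- Starting from C_i (1 ≤ i ≤ n−1), the schedule
S(p_{i+1}); S(p₁); R(p₁); R(p₂); …; R(p_n) is a valid execution fragment of 𝒯ℰ
and leads to configuration C_{i+1}. -/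
theorem stmt18 (n i : ℕ) [NeZero n] (hi1 : 1 ≤ i) (hi2 : i ≤ n - 1) :
    valid n (C n i)
      ((true, (⟨i, by omega⟩ : Fin n)) :: (true, 0) ::
        (List.finRange n).map (fun j => (false, j))) ∧
    run n (C n i)
      ((true, (⟨i, by omega⟩ : Fin n)) :: (true, 0) ::
        (List.finRange n).map (fun j => (false, j))) = C n (i + 1) := by
  obtain ⟨he1, ha1⟩ := enabled_and_applyAct_S_C hi1 (by omega : i < n)
  obtain ⟨he2, ha2⟩ := enabled_and_applyAct_S_zero (by omega : i + 1 ≤ n)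
  obtain ⟨he3, ha3⟩ := enabled_and_applyAct_R_zero (n := n) i
  obtain ⟨m, rfl⟩ := Nat.exists_eq_add_one_of_ne_zero (NeZero.ne n)
  rw [valid_cons_and_run_cons_iff he1 ha1, valid_cons_and_run_cons_iff he2 ha2,
    List.finRange_succ, List.map_cons, valid_cons_and_run_cons_iff he3 ha3]
  exact valid_and_run_R_succ m i

end TEStar
end
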